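/- Let V₁, V₂: ℝ → [0,∞) be Orlicz functions such that ∫_ℝ V₁(x) e^{αV₂(x)} dx < ∞ for all α ∈ (-∞,0). Then the map α ↦ (∫_ℝ V₁(x) e^{αV₂(x)} dx) / (∫_ℝ e^{αV₂(x)} dx) is monotone increasing on (-∞,0); i.e., for -∞ < α₁ ≤ α₂ < 0, m_{V₁}(μ_{V₂,α₁}) ≤ m_{V₁}(μ_{V₂,α₂}). -/

import Mathlib

/-!
Both `V₁` and `e^{(α₂ - α₁) V₂}` are nondecreasing functions of `|x|` (a convex symmetric function
with minimum at `0` grows away from `0`), so they are similarly ordered. Chebyshev's integral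
inequality for the weight `e^{α₁ V₂}` then gives
`∫ V₁ e^{α₁V₂} · ∫ e^{α₂V₂} ≤ ∫ V₁ e^{α₂V₂} · ∫ e^{α₁V₂}`.
-/

open MeasureTheory Real Filter Topology ENNReal

noncomputable section

/-- An Orlicz function: convex, symmetric, vanishing only at `0`, nonnegative. -/
def IsOrlicz (V : ℝ → ℝ) : Prop :=
  ConvexOn ℝ Set.univ V ∧ (∀ x, V (-x) = V x) ∧ V 0 = 0 ∧ (∀ x, x ≠ 0 → 0 < V x) ∧
    (∀ x, 0 ≤ V x)

section Chebyshev

variable {α : Type*} [MeasurableSpace α] {μ : Measure α} {f g w : α → ℝ}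

theorem Monovary.integral_mul_integral_le_integral_mul_integral (hfg : Monovary f g)
    (hw : 0 ≤ w) (hw_int : Integrable w μ) (hfw : Integrable (fun x ↦ f x * w x) μ)
    (hgw : Integrable (fun x ↦ g x * w x) μ) (hfgw : Integrable (fun x ↦ f x * g x * w x) μ) :
    (∫ x, f x * w x ∂μ) * (∫ x, g x * w x ∂μ) ≤ (∫ x, f x * g x * w x ∂μ) * ∫ x, w x ∂μ := by
  set F := ∫ x, f x * w x ∂μ
  set G := ∫ x, g x * w x ∂μ
  set H := ∫ x, f x * g x * w x ∂μ
  set W := ∫ x, w x ∂μ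
  -- Chebyshev's symmetrisation: integrate `(f x - f y) * (g x - g y) ≥ 0` against `w x * w y`.
  have inner (x : α) : ∫ y, (f x - f y) * (g x - g y) * (w x * w y) ∂μ
      = f x * g x * w x * W - f x * w x * G - g x * w x * F + w x * H := by
    have expand : (fun y ↦ (f x - f y) * (g x - g y) * (w x * w y)) = fun y ↦
        f x * g x * w x * w y - f x * w x * (g y * w y) - g x * w x * (f y * w y)
          + w x * (f y * g y * w y) := by
      funext y; ring
    rw [expand, integral_add (by fun_prop) (by fun_prop), integral_sub (by fun_prop) (by fun_prop),
      integral_sub (by fun_prop) (by fun_prop), integral_const_mul, integral_const_mul,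
      integral_const_mul, integral_const_mul]
  have outer : ∫ x, (f x * g x * w x * W - f x * w x * G - g x * w x * F + w x * H) ∂μ
      = 2 * (H * W - F * G) := by
    rw [integral_add (by fun_prop) (by fun_prop), integral_sub (by fun_prop) (by fun_prop),
      integral_sub (by fun_prop) (by fun_prop), integral_mul_const, integral_mul_const,
      integral_mul_const, integral_mul_const]
    ring
  have : 0 ≤ 2 * (H * W - F * G) := by
    rw [← outer]
    refine integral_nonneg fun x ↦ ?_
    rw [← inner x]
    exact integral_nonneg fun y ↦ mul_nonneg (hfg.sub_mul_sub_nonneg y x) (mul_nonneg (hw x) (hw y))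
  linarith

end Chebyshev

namespace IsOrlicz

variable {V : ℝ → ℝ}

theorem continuous (hV : IsOrlicz V) : Continuous V :=
  continuousOn_univ.mp (hV.1.continuousOn isOpen_univ)

theorem apply_abs (hV : IsOrlicz V) (x : ℝ) : V |x| = V x := by
  rcases abs_choice x with h | h <;> rw [h]
  exact hV.2.1 x

theorem monotoneOn (hV : IsOrlicz V) : MonotoneOn V (Set.Ici 0) := by
  intro s hs t ht hst
  rcases (Set.mem_Ici.mp hs).eq_or_lt with rfl | hs_pos
  · rw [hV.2.2.1]; exact hV.2.2.2.2 t
  · exact hV.1.le_right_of_left_le'' (Set.mem_univ 0) (Set.mem_univ t) hs_pos hst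
      (by rw [hV.2.2.1]; exact hV.2.2.2.2 s)

theorem le_of_abs_le (hV : IsOrlicz V) {x y : ℝ} (h : |x| ≤ |y|) : V x ≤ V y := by
  rw [← hV.apply_abs x, ← hV.apply_abs y]
  exact hV.monotoneOn (abs_nonneg x) (abs_nonneg y) h

theorem monovary (hV : IsOrlicz V) {g : ℝ → ℝ} (hg : ∀ x y, |x| ≤ |y| → g x ≤ g y) :
    Monovary V g := fun x y hxy ↦
  hV.le_of_abs_le (le_of_not_ge fun h ↦ (hg y x h).not_gt hxy)

theorem integrable_of_integrable_mul (hV : IsOrlicz V) {g : ℝ → ℝ} (hg : Continuous g)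
    (hVg : Integrable (fun x ↦ V x * g x)) : Integrable g := by
  rw [← integrableOn_univ, ← Set.union_compl_self (Set.Icc (-1) 1), integrableOn_union]
  refine ⟨hg.integrableOn_Icc, ?_⟩
  have hV1 : 0 < V 1 := hV.2.2.2.1 1 one_ne_zero
  -- Off `[-1, 1]` we have `V ≥ V 1 > 0`, so `|g| ≤ |V * g| / V 1`.
  refine (hVg.norm.integrableOn.const_mul (V 1)⁻¹).mono' hg.aestronglyMeasurable.restrict
    (ae_restrict_of_forall_mem measurableSet_Icc.compl fun x hx ↦ ?_)
  have h1x : |1| ≤ |x| := by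
    rw [abs_one]
    by_contra! h
    exact hx (Set.mem_Icc.mpr (abs_le.mp h.le))
  rw [norm_mul, Real.norm_of_nonneg (hV.2.2.2.2 _), ← mul_assoc, inv_mul_eq_div]
  exact le_mul_of_one_le_left (norm_nonneg _) ((one_le_div hV1).mpr (hV.le_of_abs_le h1x))

end IsOrlicz

/-- The map `α ↦ m_{V₁}(μ_{V₂,α}) = ∫ V₁ e^{αV₂} / ∫ e^{αV₂}` is monotone increasing
on `(-∞,0)`. -/
theorem stmt14 (V₁ V₂ : ℝ → ℝ) (hV₁ : IsOrlicz V₁) (hV₂ : IsOrlicz V₂)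
    (hint : ∀ α : ℝ, α < 0 → Integrable (fun x : ℝ => V₁ x * Real.exp (α * V₂ x))) :
    ∀ α₁ α₂ : ℝ, α₁ ≤ α₂ → α₂ < 0 →
      (∫ x : ℝ, V₁ x * Real.exp (α₁ * V₂ x)) / (∫ x : ℝ, Real.exp (α₁ * V₂ x))
        ≤ (∫ x : ℝ, V₁ x * Real.exp (α₂ * V₂ x)) / (∫ x : ℝ, Real.exp (α₂ * V₂ x)) := by
  intro a b hab hb
  have ha : a < 0 := hab.trans_lt hb
  have hexp_int {c : ℝ} (hc : c < 0) : Integrable fun x ↦ Real.exp (c * V₂ x) :=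
    hV₁.integrable_of_integrable_mul (continuous_const.mul hV₂.continuous).rexp (hint c hc)
  have hsplit (x : ℝ) : Real.exp ((b - a) * V₂ x) * Real.exp (a * V₂ x) = Real.exp (b * V₂ x) := by
    rw [← Real.exp_add]; ring_nf
  have hmono : Monovary V₁ fun x ↦ Real.exp ((b - a) * V₂ x) :=
    hV₁.monovary fun x y hxy ↦ Real.exp_le_exp.mpr
      (mul_le_mul_of_nonneg_left (hV₂.le_of_abs_le hxy) (sub_nonneg.mpr hab))
  have key := hmono.integral_mul_integral_le_integral_mul_integral (fun x ↦ (Real.exp_pos _).le)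
    (hexp_int ha) (hint a ha) (by simpa only [hsplit] using hexp_int hb)
    (by simpa only [mul_assoc, hsplit] using hint b hb)
  simp only [mul_assoc, hsplit] at key
  rw [div_le_div_iff₀ (integral_exp_pos (hexp_int ha)) (integral_exp_pos (hexp_int hb))]
  exact key
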